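/- Let R = ℂ[∂]x ⊕ ℂ[∂]y be the free ℤ₂-graded ℂ[∂]-module of rank (1+1) with x even and y odd, equipped with the Lie conformal superalgebra structure [x_λ x] = (∂ + 2λ)x, [x_λ y] = (∂ + (3/2)λ)y, [y_λ y] = α x, where α ∈ ℂ. Then the only compatible transposed Poisson conformal superalgebra structure on R is the trivial one: every even λ-product ∘_λ making (R, ∘_λ, [·_λ ·]) a transposed Poisson conformal superalgebra satisfies x ∘_λ x = x ∘_λ y = y ∘_λ y = 0. -/

import Mathlib

/-!
Evenness forces `x ∘_λ x = A x`, `x ∘_λ y = B y` and `y ∘_λ y = D x` with `A, B, D ∈ ℂ[∂]`.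
The transposed Leibniz rule with `b = x` and `μ = 0`, where `[x_0 c] = ∂c`, gives
`(∂ + 2λ) A = A(-λ) (∂ + 2λ)`, so `A` is a constant `a`, and then `(∂ + 2λ) B = a (∂ + 3λ/2)`.
Evaluating at `∂ = -2λ` yields `a = 0` and `B = 0` whenever `λ ≠ 0`, hence for all `λ`, as both
sides are polynomial in `λ`. Supercommutativity now kills `y ∘_λ x`, and the rule for
`(a, b, c) = (y, x, y)` reduces to `(∂ + 2λ) D = 0`.
-/

open Polynomial
open scoped TensorProduct

noncomputable section

namespace TPCSAFormal

/-- The super-sign `(-1)^{i·j}` for parities `i, j ∈ ℤ/2ℤ`. -/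
def sgn (i j : ZMod 2) : ℂ := (-1 : ℂ) ^ (i.val * j.val)

variable (L : Type*) [AddCommGroup L] [Module ℂ L]
  [Module (Polynomial ℂ) L] [IsScalarTower ℂ (Polynomial ℂ) L]

/-- A conformal `λ`-product on the `ℂ[∂]`-module `L`, recorded by its family of `n`-th
product coefficients: `a ∘_λ b = ∑_n λ^n • coeff n a b`, with finitely many nonzero terms.
This is exactly the data of a `ℂ`-bilinear map `L ⊗ L → ℂ[λ] ⊗ L`. -/
structure ConformalProduct where
  coeff : ℕ → L →ₗ[ℂ] L →ₗ[ℂ] L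
  coeff_finite : ∀ a b : L, ∃ N : ℕ, ∀ n : ℕ, N ≤ n → coeff n a b = 0

variable {L}

/-- The value `a ∘_λ b` of the `λ`-product at `λ ∈ ℂ`.  Since `ℂ` is infinite, identities
between such values for all `λ` are equivalent to the corresponding polynomial identities. -/
def ConformalProduct.mul (m : ConformalProduct L) (lam : ℂ) (a b : L) : L :=
  ∑ᶠ n : ℕ, lam ^ n • m.coeff n a b

/-- The value `a ∘_{-∂-λ} b`, where `∂` acts on `L` as scalar multiplication by
`X ∈ ℂ[∂]` (the variable `λ` being replaced by the operator `-∂-λ`). -/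
def ConformalProduct.cmul (m : ConformalProduct L) (lam : ℂ) (a b : L) : L :=
  ∑ᶠ n : ℕ, ((-((X : Polynomial ℂ) + C lam)) ^ n) • m.coeff n a b

variable (L) in
/-- A `ℤ₂`-grading on `L` making it a `ℤ₂`-graded `ℂ[∂]`-module: `L = L₀ ⊕ L₁` with
`∂ L_i ⊆ L_i`, where `∂` acts as multiplication by `X ∈ ℂ[∂]`. -/
structure SuperModule where
  grade : ZMod 2 → Submodule ℂ L
  isInternal : DirectSum.IsInternal grade
  X_smul_mem : ∀ (i : ZMod 2) (a : L), a ∈ grade i → (X : Polynomial ℂ) • a ∈ grade i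

/-- `m` is an even `λ`-product on the `ℤ₂`-graded `ℂ[∂]`-module `(L, S)`:
it is even with respect to the grading and conformally sesquilinear. -/
structure IsLambdaProduct (S : SuperModule L) (m : ConformalProduct L) : Prop where
  even : ∀ (i j : ZMod 2) (a b : L), a ∈ S.grade i → b ∈ S.grade j →
    ∀ n : ℕ, m.coeff n a b ∈ S.grade (i + j)
  sesq_left : ∀ (lam : ℂ) (a b : L),
    m.mul lam ((X : Polynomial ℂ) • a) b = (-lam) • m.mul lam a b
  sesq_right : ∀ (lam : ℂ) (a b : L),
    m.mul lam a ((X : Polynomial ℂ) • b) =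
      (X : Polynomial ℂ) • m.mul lam a b + lam • m.mul lam a b

/-- `(L, S, m)` is a commutative associative conformal superalgebra. -/
structure IsCommAssoc (S : SuperModule L) (m : ConformalProduct L)
    extends IsLambdaProduct S m : Prop where
  comm : ∀ (i j : ZMod 2) (a b : L), a ∈ S.grade i → b ∈ S.grade j →
    ∀ lam : ℂ, m.mul lam a b = sgn i j • m.cmul lam b a
  assoc : ∀ (lam mu : ℂ) (a b c : L),
    m.mul lam a (m.mul mu b c) = m.mul (lam + mu) (m.mul lam a b) c

/-- `(L, S, br)` is a Lie conformal superalgebra. -/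
structure IsLie (S : SuperModule L) (br : ConformalProduct L)
    extends IsLambdaProduct S br : Prop where
  skew : ∀ (i j : ZMod 2) (a b : L), a ∈ S.grade i → b ∈ S.grade j →
    ∀ lam : ℂ, br.mul lam a b = -(sgn i j • br.cmul lam b a)
  jacobi : ∀ (i j : ZMod 2) (a b : L), a ∈ S.grade i → b ∈ S.grade j →
    ∀ (c : L) (lam mu : ℂ),
      br.mul lam a (br.mul mu b c) =
        br.mul (lam + mu) (br.mul lam a b) c + sgn i j • br.mul mu b (br.mul lam a c)

/-- `(L, S, m, br)` is a transposed Poisson conformal superalgebra. -/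
structure IsTPCSA (S : SuperModule L) (m br : ConformalProduct L) : Prop where
  commAssoc : IsCommAssoc S m
  lie : IsLie S br
  transposedLeibniz : ∀ (i j : ZMod 2) (a b : L), a ∈ S.grade i → b ∈ S.grade j →
    ∀ (c : L) (lam mu : ℂ),
      (2 : ℂ) • m.mul lam a (br.mul mu b c) =
        br.mul (lam + mu) (m.mul lam a b) c + sgn i j • br.mul mu b (m.mul lam a c)

/-- `(L, S, m, br)` is a Poisson conformal superalgebra. -/
structure IsPCSA (S : SuperModule L) (m br : ConformalProduct L) : Prop where
  commAssoc : IsCommAssoc S m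
  lie : IsLie S br
  leibniz : ∀ (i j : ZMod 2) (a b : L), a ∈ S.grade i → b ∈ S.grade j →
    ∀ (c : L) (lam mu : ℂ),
      br.mul lam a (m.mul mu b c) =
        m.mul (lam + mu) (br.mul lam a b) c + sgn i j • m.mul mu b (br.mul lam a c)

/-- `(L, S, br, α)` is a Hom-Lie conformal superalgebra. -/
structure IsHomLie (S : SuperModule L) (br : ConformalProduct L) (α : L → L)
    extends IsLambdaProduct S br : Prop where
  map_smul_add : ∀ (c : ℂ) (a b : L), α (c • a + b) = c • α a + α b
  map_grade : ∀ (i : ZMod 2) (a : L), a ∈ S.grade i → α a ∈ S.grade i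
  commute_partial : ∀ a : L, α ((X : Polynomial ℂ) • a) = (X : Polynomial ℂ) • α a
  skew : ∀ (i j : ZMod 2) (a b : L), a ∈ S.grade i → b ∈ S.grade j →
    ∀ lam : ℂ, br.mul lam a b = -(sgn i j • br.cmul lam b a)
  homJacobi : ∀ (i j : ZMod 2) (a b : L), a ∈ S.grade i → b ∈ S.grade j →
    ∀ (c : L) (lam mu : ℂ),
      br.mul lam (α a) (br.mul mu b c) =
        br.mul (lam + mu) (br.mul lam a b) (α c) + sgn i j • br.mul mu (α b) (br.mul lam a c)

/-- `(L, S, p)` is a left-symmetric conformal superalgebra. -/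
structure IsLeftSymmetric (S : SuperModule L) (p : ConformalProduct L)
    extends IsLambdaProduct S p : Prop where
  leftSym : ∀ (i j : ZMod 2) (a b : L), a ∈ S.grade i → b ∈ S.grade j →
    ∀ (c : L) (lam mu : ℂ),
      p.mul (lam + mu) (p.mul lam a b) c - p.mul lam a (p.mul mu b c) =
        sgn i j • (p.mul (lam + mu) (p.mul mu b a) c - p.mul mu b (p.mul lam a c))

/-- `(L, S, p)` is a (left) Novikov conformal superalgebra. -/
structure IsNovikov (S : SuperModule L) (p : ConformalProduct L)
    extends IsLeftSymmetric S p : Prop where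
  novikov : ∀ (j k : ZMod 2) (b c : L), b ∈ S.grade j → c ∈ S.grade k →
    ∀ (a : L) (lam mu : ℂ),
      p.mul (lam + mu) (p.mul lam a b) c = sgn j k • p.cmul mu (p.mul lam a c) b

/-- `(L, S, mc, p)` is a Novikov-Poisson conformal superalgebra. -/
structure IsNovikovPoisson (S : SuperModule L) (mc p : ConformalProduct L) : Prop where
  commAssoc : IsCommAssoc S mc
  novikov : IsNovikov S p
  compat₁ : ∀ (lam mu : ℂ) (a b c : L),
    p.mul (lam + mu) (mc.mul lam a b) c = mc.mul lam a (p.mul mu b c)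
  compat₂ : ∀ (i j : ZMod 2) (a b : L), a ∈ S.grade i → b ∈ S.grade j →
    ∀ (c : L) (lam mu : ℂ),
      mc.mul (lam + mu) (p.mul lam a b) c - p.mul lam a (mc.mul mu b c) =
        sgn i j • (mc.mul (lam + mu) (p.mul mu b a) c - p.mul mu b (mc.mul lam a c))

/-- `(L, S, mc, p)` is a pre-Lie commutative conformal superalgebra. -/
structure IsPreLieComm (S : SuperModule L) (mc p : ConformalProduct L) : Prop where
  commAssoc : IsCommAssoc S mc
  leftSymmetric : IsLeftSymmetric S p
  compat : ∀ (i j : ZMod 2) (a b : L), a ∈ S.grade i → b ∈ S.grade j →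
    ∀ (c : L) (lam mu : ℂ),
      p.mul lam a (mc.mul mu b c) =
        mc.mul (lam + mu) (p.mul lam a b) c + sgn i j • mc.mul mu b (p.mul lam a c)

/-- `(L, S, mc, p)` is a pre-Lie Poisson conformal superalgebra. -/
structure IsPreLiePoisson (S : SuperModule L) (mc p : ConformalProduct L) : Prop where
  commAssoc : IsCommAssoc S mc
  leftSymmetric : IsLeftSymmetric S p
  compat₁ : ∀ (lam mu : ℂ) (a b c : L),
    p.mul (lam + mu) (mc.mul lam a b) c = mc.mul lam a (p.mul mu b c)
  compat₂ : ∀ (i j : ZMod 2) (a b : L), a ∈ S.grade i → b ∈ S.grade j →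
    ∀ (c : L) (lam mu : ℂ),
      mc.mul (lam + mu) (p.mul lam a b) c - p.mul lam a (mc.mul mu b c) =
        sgn i j • (mc.mul (lam + mu) (p.mul mu b a) c - p.mul mu b (mc.mul lam a c))


/-- The even generator `x` of the free rank (1+1) `ℂ[∂]`-module `R = ℂ[∂]x ⊕ ℂ[∂]y`. -/
def xGen : Polynomial ℂ × Polynomial ℂ := (1, 0)

/-- The odd generator `y` of the free rank (1+1) `ℂ[∂]`-module `R = ℂ[∂]x ⊕ ℂ[∂]y`. -/
def yGen : Polynomial ℂ × Polynomial ℂ := (0, 1)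

end TPCSAFormal

namespace TPCSAFormal

section General

variable {L : Type*} [AddCommGroup L] [Module ℂ L]

namespace ConformalProduct

variable (m : ConformalProduct L)

theorem hasFiniteSupport_smul_coeff (lam : ℂ) (a b : L) :
    (fun n => lam ^ n • m.coeff n a b).HasFiniteSupport := by
  obtain ⟨N, hN⟩ := m.coeff_finite a b
  refine (Set.finite_Iio N).subset fun n hn => ?_
  by_contra h
  exact hn (by simp [hN n (not_lt.1 h)])

theorem mul_add_left (lam : ℂ) (a a' b : L) :
    m.mul lam (a + a') b = m.mul lam a b + m.mul lam a' b := by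
  simp only [mul, map_add, LinearMap.add_apply, smul_add]
  exact finsum_add_distrib (m.hasFiniteSupport_smul_coeff lam a b)
    (m.hasFiniteSupport_smul_coeff lam a' b)

theorem mul_add_right (lam : ℂ) (a b b' : L) :
    m.mul lam a (b + b') = m.mul lam a b + m.mul lam a b' := by
  simp only [mul, map_add, smul_add]
  exact finsum_add_distrib (m.hasFiniteSupport_smul_coeff lam a b)
    (m.hasFiniteSupport_smul_coeff lam a b')

theorem mul_smul_left (lam c : ℂ) (a b : L) : m.mul lam (c • a) b = c • m.mul lam a b := by
  simp only [mul, map_smul, LinearMap.smul_apply, smul_finsum, smul_comm c]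

theorem mul_smul_right (lam c : ℂ) (a b : L) : m.mul lam a (c • b) = c • m.mul lam a b := by
  simp only [mul, map_smul, smul_finsum, smul_comm c]

theorem mul_zero_left (lam : ℂ) (b : L) : m.mul lam 0 b = 0 := by
  simp [mul]

theorem mul_eq_sum_range (lam : ℂ) (a b : L) {N : ℕ} (hN : ∀ n, N ≤ n → m.coeff n a b = 0) :
    m.mul lam a b = ∑ n ∈ Finset.range N, lam ^ n • m.coeff n a b :=
  finsum_eq_sum_of_support_subset _ fun n hn => by
    by_contra h
    exact hn (by simp [hN n (by simpa using h)])

theorem coeff_eq_zero_of_mul_eq_zero {a b : L} (h : ∀ lam ≠ 0, m.mul lam a b = 0) (n : ℕ) :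
    m.coeff n a b = 0 := by
  obtain ⟨N, hN⟩ := m.coeff_finite a b
  refine (Module.forall_dual_apply_eq_zero_iff ℂ _).1 fun φ => ?_
  let q : ℂ[X] := ∑ k ∈ Finset.range N, C (φ (m.coeff k a b)) * X ^ k
  have hq : ∀ lam, q.eval lam = φ (m.mul lam a b) := fun lam => by
    simp only [q, m.mul_eq_sum_range lam a b hN, eval_finsetSum, map_sum, map_smul, eval_mul,
      eval_C, eval_pow, eval_X, smul_eq_mul, mul_comm]
  have hq0 : q = 0 := eq_zero_of_infinite_isRoot q <|
    (Set.finite_singleton 0).infinite_compl.mono fun lam hlam => by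
      simp [IsRoot, hq, h lam hlam]
  have := Polynomial.ext_iff.1 hq0 n
  simp only [q, finsetSum_coeff, coeff_C_mul_X_pow, Finset.sum_ite_eq, Finset.mem_range,
    coeff_zero] at this
  split_ifs at this with hn
  · exact this
  · rw [hN n (not_lt.1 hn), map_zero]

theorem mul_eq_zero_of_coeff_eq_zero {a b : L} (h : ∀ n, m.coeff n a b = 0) (lam : ℂ) :
    m.mul lam a b = 0 := by
  simp [mul, h]

theorem cmul_eq_zero_of_coeff_eq_zero [Module ℂ[X] L] {a b : L} (h : ∀ n, m.coeff n a b = 0)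
    (lam : ℂ) : m.cmul lam a b = 0 := by
  simp [cmul, h]

end ConformalProduct

theorem C_smul_eq_smul [Module ℂ[X] L] [IsScalarTower ℂ ℂ[X] L] (c : ℂ) (a : L) :
    (C c : ℂ[X]) • a = c • a :=
  algebraMap_smul ℂ[X] c a

namespace IsLambdaProduct

variable [Module ℂ[X] L] {S : SuperModule L} {m : ConformalProduct L}

theorem mul_mem_grade (hm : IsLambdaProduct S m) {i j : ZMod 2} {a b : L} (ha : a ∈ S.grade i)
    (hb : b ∈ S.grade j) (lam : ℂ) : m.mul lam a b ∈ S.grade (i + j) :=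
  finsum_induction (· ∈ S.grade (i + j)) (zero_mem _) (fun _ _ => add_mem)
    fun n => Submodule.smul_mem _ _ (hm.even i j a b ha hb n)

variable [IsScalarTower ℂ ℂ[X] L]

theorem mul_polynomial_smul_left (hm : IsLambdaProduct S m) (lam : ℂ) (p : ℂ[X]) (a b : L) :
    m.mul lam (p • a) b = p.eval (-lam) • m.mul lam a b := by
  induction p using Polynomial.induction_on generalizing a with
  | C c => rw [C_smul_eq_smul, m.mul_smul_left, eval_C]
  | add p q hp hq => rw [add_smul, m.mul_add_left, hp, hq, eval_add, add_smul]
  | monomial n c ih =>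
    rw [pow_succ, ← mul_assoc, mul_smul, ih, hm.sesq_left, smul_smul, eval_mul_X]

theorem mul_polynomial_smul_right (hm : IsLambdaProduct S m) (lam : ℂ) (p : ℂ[X]) (a b : L) :
    m.mul lam a (p • b) = p.comp (X + C lam) • m.mul lam a b := by
  induction p using Polynomial.induction_on generalizing b with
  | C c => rw [C_smul_eq_smul, m.mul_smul_right, C_comp, C_smul_eq_smul]
  | add p q hp hq => rw [add_smul, m.mul_add_right, hp, hq, add_comp, add_smul]
  | monomial n c ih =>
    rw [pow_succ, ← mul_assoc, mul_smul, ih, hm.sesq_right, mul_X_comp, mul_smul,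
      add_smul, C_smul_eq_smul]

end IsLambdaProduct

end General

theorem sgn_zero_right (i : ZMod 2) : sgn i 0 = 1 := by simp [sgn]

theorem smul_xGen (p : ℂ[X]) : p • xGen = (p, 0) := by simp [xGen]

theorem smul_yGen (p : ℂ[X]) : p • yGen = (0, p) := by simp [yGen]

section RankOneOne

variable {S : SuperModule (ℂ[X] × ℂ[X])} {m br : ConformalProduct (ℂ[X] × ℂ[X])}

theorem xGen_mem_grade_zero (hS0 : S.grade 0 = LinearMap.ker (LinearMap.snd ℂ ℂ[X] ℂ[X])) :
    xGen ∈ S.grade 0 := by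
  rw [hS0]; rfl

theorem yGen_mem_grade_one (hS1 : S.grade 1 = LinearMap.ker (LinearMap.fst ℂ ℂ[X] ℂ[X])) :
    yGen ∈ S.grade 1 := by
  rw [hS1]; rfl

theorem eq_fst_smul_xGen_of_mem_grade_zero
    (hS0 : S.grade 0 = LinearMap.ker (LinearMap.snd ℂ ℂ[X] ℂ[X])) {v : ℂ[X] × ℂ[X]}
    (hv : v ∈ S.grade 0) : v = v.1 • xGen := by
  rw [hS0] at hv
  rw [smul_xGen]
  exact Prod.ext rfl hv

theorem eq_snd_smul_yGen_of_mem_grade_one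
    (hS1 : S.grade 1 = LinearMap.ker (LinearMap.fst ℂ ℂ[X] ℂ[X])) {v : ℂ[X] × ℂ[X]}
    (hv : v ∈ S.grade 1) : v = v.2 • yGen := by
  rw [hS1] at hv
  rw [smul_yGen]
  exact Prod.ext hv rfl

variable (hS0 : S.grade 0 = LinearMap.ker (LinearMap.snd ℂ ℂ[X] ℂ[X]))
  (hS1 : S.grade 1 = LinearMap.ker (LinearMap.fst ℂ ℂ[X] ℂ[X]))
  (hT : IsTPCSA S m br)
  (hxx : ∀ lam : ℂ, br.mul lam xGen xGen = ((X : Polynomial ℂ) + C (2 * lam)) • xGen)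
  (hxy : ∀ lam : ℂ, br.mul lam xGen yGen = ((X : Polynomial ℂ) + C ((3 / 2) * lam)) • yGen)

include hS0 hT hxx in
theorem exists_mul_xGen_xGen_eq_C_smul (lam : ℂ) :
    ∃ a : ℂ, m.mul lam xGen xGen = C a • xGen := by
  have hx := xGen_mem_grade_zero hS0
  set A := (m.mul lam xGen xGen).1
  have hA : m.mul lam xGen xGen = A • xGen :=
    eq_fst_smul_xGen_of_mem_grade_zero hS0 (hT.commAssoc.mul_mem_grade hx hx lam)
  have h := hT.transposedLeibniz 0 0 xGen xGen hx hx xGen lam 0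
  rw [hxx, hT.commAssoc.mul_polynomial_smul_right, hA, hT.lie.mul_polynomial_smul_left,
    hT.lie.mul_polynomial_smul_right, hxx, hxx, sgn_zero_right, one_smul] at h
  have h1 := congrArg Prod.fst h
  simp only [mul_zero, map_zero, add_zero, X_comp, comp_X, smul_xGen, Prod.smul_mk, smul_eq_mul,
    smul_eq_C_mul, smul_zero, smul_add, Prod.mk_add_mk, map_ofNat] at h1
  have hA0 : (X + C (2 * lam)) * A = (X + C (2 * lam)) * C (A.eval (-lam)) := by
    simp only [C_mul, map_ofNat] at h1 ⊢
    linear_combination h1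
  exact ⟨_, hA.trans (congrArg (· • xGen) (mul_left_cancel₀ (X_add_C_ne_zero _) hA0))⟩

include hS0 hS1 hT hxx hxy in
theorem mul_xGen_eq_zero_of_ne_zero {lam : ℂ} (hlam : lam ≠ 0) :
    m.mul lam xGen xGen = 0 ∧ m.mul lam xGen yGen = 0 := by
  have hx := xGen_mem_grade_zero hS0
  have hy := yGen_mem_grade_one hS1
  obtain ⟨a, ha⟩ := exists_mul_xGen_xGen_eq_C_smul hS0 hT hxx lam
  set B := (m.mul lam xGen yGen).2
  have hB : m.mul lam xGen yGen = B • yGen := eq_snd_smul_yGen_of_mem_grade_one hS1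
    (hT.commAssoc.mul_mem_grade hx hy lam)
  have h := hT.transposedLeibniz 0 0 xGen xGen hx hx yGen lam 0
  rw [hxy, hT.commAssoc.mul_polynomial_smul_right, hB, ha, hT.lie.mul_polynomial_smul_left,
    hT.lie.mul_polynomial_smul_right, hxy, hxy, sgn_zero_right, one_smul] at h
  have h2 := congrArg Prod.snd h
  simp only [mul_zero, map_zero, add_zero, X_comp, comp_X, smul_yGen, Prod.smul_mk, smul_eq_mul,
    smul_eq_C_mul, smul_zero, eval_C, smul_add, Prod.mk_add_mk, map_ofNat] at h2
  have hB' : (X + C (2 * lam)) * B = C a * (X + C (3 / 2 * lam)) := by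
    simp only [C_mul, map_ofNat] at h2 ⊢
    linear_combination h2
  have ha0 : a = 0 := by
    have h3 := congrArg (eval (-(2 * lam))) hB'
    simp only [eval_mul, eval_add, eval_X, eval_C, neg_add_cancel, zero_mul] at h3
    have : a * lam = 0 := by linear_combination 2 * h3
    exact (mul_eq_zero.1 this).resolve_right hlam
  rw [ha0, C_0, zero_mul] at hB'
  have hB0 : B = 0 := (mul_eq_zero.1 hB').resolve_left (X_add_C_ne_zero _)
  exact ⟨by rw [ha, ha0, C_0, zero_smul], by rw [hB, hB0, zero_smul]⟩

include hS0 hS1 hT hxx hxy in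
theorem mul_yGen_yGen_eq_zero (hyx : ∀ lam, m.mul lam yGen xGen = 0) (lam : ℂ) :
    m.mul lam yGen yGen = 0 := by
  have hx := xGen_mem_grade_zero hS0
  have hy := yGen_mem_grade_one hS1
  set D := (m.mul lam yGen yGen).1
  have hD : m.mul lam yGen yGen = D • xGen := eq_fst_smul_xGen_of_mem_grade_zero hS0
    (hT.commAssoc.mul_mem_grade hy hy lam)
  have h := hT.transposedLeibniz 1 0 yGen xGen hy hx yGen lam 0
  rw [hxy, hT.commAssoc.mul_polynomial_smul_right, hD, hyx, br.mul_zero_left, zero_add,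
    sgn_zero_right, one_smul, hT.lie.mul_polynomial_smul_right, hxx] at h
  have h1 := congrArg Prod.fst h
  simp only [mul_zero, map_zero, add_zero, X_comp, comp_X, smul_xGen, Prod.smul_mk, smul_eq_mul,
    smul_eq_C_mul, smul_zero, map_ofNat] at h1
  have hD' : (X + C (2 * lam)) * D = 0 := by
    simp only [C_mul, map_ofNat] at h1 ⊢
    linear_combination h1
  rw [hD, (mul_eq_zero.1 hD').resolve_left (X_add_C_ne_zero _), zero_smul]

end RankOneOne

theorem statement_19_general (S : SuperModule (Polynomial ℂ × Polynomial ℂ))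
    (hS0 : S.grade 0 = LinearMap.ker (LinearMap.snd ℂ (Polynomial ℂ) (Polynomial ℂ)))
    (hS1 : S.grade 1 = LinearMap.ker (LinearMap.fst ℂ (Polynomial ℂ) (Polynomial ℂ)))
    (br : ConformalProduct (Polynomial ℂ × Polynomial ℂ))
    (hxx : ∀ lam : ℂ, br.mul lam xGen xGen = ((X : Polynomial ℂ) + C (2 * lam)) • xGen)
    (hxy : ∀ lam : ℂ, br.mul lam xGen yGen = ((X : Polynomial ℂ) + C ((3 / 2) * lam)) • yGen)
    (m : ConformalProduct (Polynomial ℂ × Polynomial ℂ))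
    (hT : IsTPCSA S m br) :
    ∀ lam : ℂ, m.mul lam xGen xGen = 0 ∧ m.mul lam xGen yGen = 0 ∧
      m.mul lam yGen yGen = 0 := by
  have hx := xGen_mem_grade_zero hS0
  have hy := yGen_mem_grade_one hS1
  have hxx0 : ∀ n, m.coeff n xGen xGen = 0 := m.coeff_eq_zero_of_mul_eq_zero fun _ hlam =>
    (mul_xGen_eq_zero_of_ne_zero hS0 hS1 hT hxx hxy hlam).1
  have hxy0 : ∀ n, m.coeff n xGen yGen = 0 := m.coeff_eq_zero_of_mul_eq_zero fun _ hlam =>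
    (mul_xGen_eq_zero_of_ne_zero hS0 hS1 hT hxx hxy hlam).2
  have hyx : ∀ lam, m.mul lam yGen xGen = 0 := fun lam => by
    rw [hT.commAssoc.comm 1 0 yGen xGen hy hx, m.cmul_eq_zero_of_coeff_eq_zero hxy0, smul_zero]
  exact fun lam => ⟨m.mul_eq_zero_of_coeff_eq_zero hxx0 lam,
    m.mul_eq_zero_of_coeff_eq_zero hxy0 lam, mul_yGen_yGen_eq_zero hS0 hS1 hT hxx hxy hyx lam⟩

/-- the Lie conformal superalgebra `R₅`: `[x_λ x] = (∂+2λ)x`,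
`[x_λ y] = (∂+(3/2)λ)y`, `[y_λ y] = αx` admits only the trivial compatible TPCSA
structure. -/
theorem statement_19 (S : SuperModule (Polynomial ℂ × Polynomial ℂ))
    (hS0 : S.grade 0 = LinearMap.ker (LinearMap.snd ℂ (Polynomial ℂ) (Polynomial ℂ)))
    (hS1 : S.grade 1 = LinearMap.ker (LinearMap.fst ℂ (Polynomial ℂ) (Polynomial ℂ)))
    (α : ℂ)
    (br : ConformalProduct (Polynomial ℂ × Polynomial ℂ)) (hbr : IsLie S br)
    (hxx : ∀ lam : ℂ, br.mul lam xGen xGen = ((X : Polynomial ℂ) + C (2 * lam)) • xGen)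
    (hxy : ∀ lam : ℂ, br.mul lam xGen yGen = ((X : Polynomial ℂ) + C ((3 / 2) * lam)) • yGen)
    (hyy : ∀ lam : ℂ, br.mul lam yGen yGen = α • xGen)
    (m : ConformalProduct (Polynomial ℂ × Polynomial ℂ)) (hm : IsLambdaProduct S m)
    (hT : IsTPCSA S m br) :
    ∀ lam : ℂ, m.mul lam xGen xGen = 0 ∧ m.mul lam xGen yGen = 0 ∧
      m.mul lam yGen yGen = 0 :=
  statement_19_general S hS0 hS1 br hxx hxy m hT

end TPCSAFormal
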